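/- arXiv:2010.06779 — 4 statements merged into one kernel-verified Lean document; each statement's English description precedes it below -/
import Mathlib

section
/- Let A be a real symmetric matrix (the weighted adjacency matrix of a graph) and let x and y be distinct strongly cospectral vertices. Suppose that one of P₊, P₋ is divisible by a product f·g of nonconstant monic real polynomials whose traces tr(f) and tr(g) are integers, with tr(f) odd and tr(f)·deg(g) − tr(g)·deg(f) odd, and that the other of P₊, P₋ has a monic factor h of odd degree whose trace tr(h) is an integer. Then there is no pretty good state transfer from x to y. -/
open Matrix Polynomial

/-- The transition matrix `U(t) = exp(i t A)`. -/
noncomputable def transition {V : Type*} [Fintype V] [DecidableEq V]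
    (A : Matrix V V ℝ) (t : ℝ) : Matrix V V ℂ :=
  NormedSpace.exp (((t : ℂ) * Complex.I) • A.map (fun a => (a : ℂ)))

/-- Pretty good state transfer from `x` to `y`. -/
def PGST {V : Type*} [Fintype V] [DecidableEq V] (A : Matrix V V ℝ) (x y : V) : Prop :=
  ∀ ε : ℝ, 0 < ε → ∃ t : ℝ, 0 < t ∧ 1 - ε < ‖transition A t x y‖

/-- `E` is the orthogonal projection matrix onto the eigenspace `{v : A v = θ v}`:
it is symmetric, idempotent, its range is contained in the eigenspace, and it fixes
the eigenspace pointwise. -/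
def IsEigenprojection {V : Type*} [Fintype V] [DecidableEq V]
    (A : Matrix V V ℝ) (θ : ℝ) (E : Matrix V V ℝ) : Prop :=
  E.IsSymm ∧ E * E = E ∧ (∀ v : V → ℝ, A *ᵥ (E *ᵥ v) = θ • (E *ᵥ v)) ∧
    (∀ v : V → ℝ, A *ᵥ v = θ • v → E *ᵥ v = v)

/-- Vertices `x` and `y` are strongly cospectral: for every eigenvalue `θ` of `A`,
`E_θ e_x = ± E_θ e_y`. -/
def StronglyCospectral {V : Type*} [Fintype V] [DecidableEq V]
    (A : Matrix V V ℝ) (x y : V) : Prop :=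
  ∀ (θ : ℝ) (E : Matrix V V ℝ), IsEigenprojection A θ E →
    E *ᵥ Pi.single x 1 = E *ᵥ Pi.single y 1 ∨ E *ᵥ Pi.single x 1 = -(E *ᵥ Pi.single y 1)

/-- `P` is the minimal polynomial of `A` relative to the vector `z`:
the monic polynomial of least degree with `P(A) z = 0`. -/
def IsRelMinpoly {V : Type*} [Fintype V] [DecidableEq V]
    (A : Matrix V V ℝ) (z : V → ℝ) (P : Polynomial ℝ) : Prop :=
  P.Monic ∧ (Polynomial.aeval A P) *ᵥ z = 0 ∧
    ∀ Q : Polynomial ℝ, Q.Monic → (Polynomial.aeval A Q) *ᵥ z = 0 → P.degree ≤ Q.degree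

/-- The trace of a monic polynomial with all roots real: the sum of its roots,
i.e. minus the coefficient of the second-highest term. -/
noncomputable def ptrace (P : Polynomial ℝ) : ℝ := -(P.coeff (P.natDegree - 1))

/-!
For an eigenvalue `θ` put `p_θ = (E_θ)_{xx} ≥ 0`, so that `∑ p_θ = 1`, and let `Φ₊`, `Φ₋` be the
sets of `θ` with `E_θ (e_x ± e_y) ≠ 0`. Then `P_± = ∏_{θ ∈ Φ_±} (X - θ)`, strong cospectrality makes
`Φ₊`, `Φ₋` disjoint, `p_θ > 0` on `Φ₊ ∪ Φ₋`, and `U(t)_{xy} = ∑ p_θ σ_θ e^{itθ}` with `σ_θ = -1` on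
`Φ₋` and `σ_θ = 1` elsewhere.

The roots of `f`, `g`, `h` form sets `T_f`, `T_g` inside one of `Φ₊`, `Φ₋` and `T_h` inside
the other. Weighting them by the entries of the cross product of `(tr f, tr g, tr h)` and
`(deg f, deg g, deg h)` gives integers `l_θ` with `∑ l_θ = ∑ l_θ θ = 0` and `∑_{Φ₋} l_θ` equal to
`±deg h · (tr f deg g - tr g deg f)`, which is odd. Hence `∏ (σ_θ e^{itθ})^{l_θ} = -1` for all `t`.
But if `|U(t)_{xy}| > 1 - ε`, every `σ_θ e^{itθ}` with `p_θ > 0` lies within `O(√ε)` of a single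
unit `γ`, and `∏ γ^{l_θ} = γ^{∑ l_θ} = 1`; this is impossible for small `ε`.
-/

namespace Polynomial

lemma exists_subset_eq_prod_X_sub_C_of_dvd {K : Type*} [Field K] {s : Finset K} {f : K[X]}
    (hf : f.Monic) (hdvd : f ∣ ∏ a ∈ s, (X - C a)) : ∃ t ⊆ s, f = ∏ a ∈ t, (X - C a) := by
  have hs : ∏ a ∈ s, (X - C a) ≠ 0 := (monic_prod_of_monic _ _ fun a _ => monic_X_sub_C a).ne_zero
  have hle : f.roots ≤ s.val := roots_prod_X_sub_C s ▸ roots.le_of_dvd hs hdvd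
  refine ⟨⟨f.roots, Multiset.nodup_of_le hle s.nodup⟩, fun a ha => Multiset.subset_of_le hle ha, ?_⟩
  exact ((Splits.prod fun a _ => Splits.X_sub_C a).of_dvd hs hdvd).eq_prod_roots_of_monic hf

lemma ptrace_prod_X_sub_C {s : Finset ℝ} (hs : s.Nonempty) :
    ptrace (∏ a ∈ s, (X - C a)) = ∑ a ∈ s, a := by
  rw [ptrace, ← nextCoeff_of_natDegree_pos (by simpa using hs.card_pos), prod_X_sub_C_nextCoeff,
    neg_neg]

end Polynomial

namespace Matrix

variable {V : Type*} [Fintype V] [DecidableEq V]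

noncomputable def eigenproj (A : Matrix V V ℝ) (θ : ℝ) : Matrix V V ℝ :=
  cfc (fun s => if s = θ then (1 : ℝ) else 0) A

noncomputable def eigenvalueFinset (A : Matrix V V ℝ) : Finset ℝ :=
  (Matrix.finite_spectrum A).toFinset

noncomputable def eigenSupport (A : Matrix V V ℝ) (z : V → ℝ) : Finset ℝ :=
  {θ ∈ eigenvalueFinset A | eigenproj A θ *ᵥ z ≠ 0}

variable {A : Matrix V V ℝ}

lemma continuousOn_spectrum (f : ℝ → ℝ) : ContinuousOn f (spectrum ℝ A) :=
  (Matrix.finite_spectrum A).continuousOn f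

lemma eigenproj_mul_cfc (θ : ℝ) (f : ℝ → ℝ) :
    eigenproj A θ * cfc f A = f θ • eigenproj A θ := by
  rw [eigenproj, ← cfc_mul _ _ A (continuousOn_spectrum _) (continuousOn_spectrum _),
    ← cfc_const_mul _ _ A (continuousOn_spectrum _)]
  congr 1
  ext s
  split_ifs <;> simp_all

lemma cfc_mul_eigenproj (θ : ℝ) (f : ℝ → ℝ) :
    cfc f A * eigenproj A θ = f θ • eigenproj A θ :=
  (cfc_commute_cfc f _ A).eq.trans (eigenproj_mul_cfc θ f)

lemma eigenproj_mul_eigenproj (θ μ : ℝ) :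
    eigenproj A θ * eigenproj A μ = if θ = μ then eigenproj A θ else 0 := by
  calc eigenproj A θ * eigenproj A μ = (if θ = μ then (1 : ℝ) else 0) • eigenproj A θ :=
        eigenproj_mul_cfc θ _
    _ = _ := by split_ifs <;> simp

lemma eigenproj_mul (hA : IsSelfAdjoint A) (θ : ℝ) : eigenproj A θ * A = θ • eigenproj A θ := by
  have h := eigenproj_mul_cfc (A := A) θ id
  rwa [cfc_id ℝ A] at h

lemma mul_eigenproj (hA : IsSelfAdjoint A) (θ : ℝ) : A * eigenproj A θ = θ • eigenproj A θ := by
  have h := cfc_mul_eigenproj (A := A) θ id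
  rwa [cfc_id ℝ A] at h

lemma eigenproj_mul_aeval (hA : IsSelfAdjoint A) (θ : ℝ) (q : ℝ[X]) :
    eigenproj A θ * aeval A q = q.eval θ • eigenproj A θ := by
  rw [← cfc_polynomial q A, eigenproj_mul_cfc]

lemma cfc_eq_sum_smul_eigenproj (f : ℝ → ℝ) :
    cfc f A = ∑ θ ∈ eigenvalueFinset A, f θ • eigenproj A θ := by
  simp_rw [eigenproj, ← cfc_smul _ _ A (continuousOn_spectrum _)]
  rw [← cfc_sum _ A _ (fun _ _ => continuousOn_spectrum _)]
  refine cfc_congr fun s hs => ?_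
  simp [eigenvalueFinset, hs]

lemma sum_eigenproj (hA : IsSelfAdjoint A) : ∑ θ ∈ eigenvalueFinset A, eigenproj A θ = 1 := by
  simpa using (cfc_eq_sum_smul_eigenproj 1).symm.trans (cfc_one ℝ A)

lemma sum_smul_eigenproj (hA : IsSelfAdjoint A) :
    ∑ θ ∈ eigenvalueFinset A, θ • eigenproj A θ = A :=
  (cfc_eq_sum_smul_eigenproj id).symm.trans (cfc_id ℝ A)

lemma eigenproj_isSymm (θ : ℝ) : (eigenproj A θ).IsSymm :=
  isHermitian_iff_isSymm.mp (cfc_predicate _ A)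

lemma eigenproj_mulVec_eq_zero_of_ne (hA : IsSelfAdjoint A) {θ μ : ℝ} (hμ : μ ≠ θ) {v : V → ℝ}
    (hv : A *ᵥ v = θ • v) : eigenproj A μ *ᵥ v = 0 := by
  have h : μ • (eigenproj A μ *ᵥ v) = θ • (eigenproj A μ *ᵥ v) := by
    rw [← smul_mulVec, ← eigenproj_mul hA, ← mulVec_mulVec, hv, mulVec_smul]
  rw [← sub_eq_zero, ← sub_smul] at h
  exact (smul_eq_zero.mp h).resolve_left (sub_ne_zero.mpr hμ)

lemma eigenproj_mulVec_of_mulVec_eq (hA : IsSelfAdjoint A) {θ : ℝ} {v : V → ℝ}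
    (hv : A *ᵥ v = θ • v) : eigenproj A θ *ᵥ v = v := by
  have h : cfc (fun s => if s = θ then (0 : ℝ) else 1) A = 1 - eigenproj A θ := by
    rw [eigenproj, ← cfc_one ℝ A,
      ← cfc_sub _ _ A (continuousOn_spectrum _) (continuousOn_spectrum _)]
    congr 1
    ext s
    split_ifs <;> simp
  have h' : (1 - eigenproj A θ) *ᵥ v = 0 := by
    rw [← h, cfc_eq_sum_smul_eigenproj, Matrix.sum_mulVec]
    refine Finset.sum_eq_zero fun μ _ => ?_
    split_ifs with hμ
    · simp
    · rw [one_smul, eigenproj_mulVec_eq_zero_of_ne hA hμ hv]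
  rwa [sub_mulVec, one_mulVec, sub_eq_zero, eq_comm] at h'

lemma isEigenprojection_eigenproj (hA : IsSelfAdjoint A) (θ : ℝ) :
    IsEigenprojection A θ (eigenproj A θ) := by
  refine ⟨eigenproj_isSymm θ, by simp [eigenproj_mul_eigenproj], fun v => ?_,
    fun v hv => eigenproj_mulVec_of_mulVec_eq hA hv⟩
  rw [mulVec_mulVec, mul_eigenproj hA, smul_mulVec]

lemma eval_eq_zero_of_mem_eigenSupport (hA : IsSelfAdjoint A) {z : V → ℝ} {q : ℝ[X]}
    (hq : aeval A q *ᵥ z = 0) {θ : ℝ} (hθ : θ ∈ eigenSupport A z) : q.eval θ = 0 := by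
  have h : q.eval θ • (eigenproj A θ *ᵥ z) = 0 := by
    rw [← smul_mulVec, ← eigenproj_mul_aeval hA, ← mulVec_mulVec, hq, mulVec_zero]
  exact (smul_eq_zero.mp h).resolve_right (Finset.mem_filter.mp hθ).2

lemma aeval_prod_eigenSupport_mulVec (hA : IsSelfAdjoint A) (z : V → ℝ) :
    aeval A (∏ θ ∈ eigenSupport A z, (X - C θ)) *ᵥ z = 0 := by
  rw [← cfc_polynomial _ A, cfc_eq_sum_smul_eigenproj, sum_mulVec]
  refine Finset.sum_eq_zero fun θ hθ => ?_
  by_cases hz : eigenproj A θ *ᵥ z = 0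
  · rw [smul_mulVec, hz, smul_zero]
  · have hmem : θ ∈ eigenSupport A z := Finset.mem_filter.mpr ⟨hθ, hz⟩
    rw [eval_prod, Finset.prod_eq_zero hmem (by simp), zero_smul, zero_mulVec]

lemma eigenproj_apply_self_eq_dotProduct (θ : ℝ) (x : V) :
    eigenproj A θ x x = (eigenproj A θ *ᵥ Pi.single x 1) ⬝ᵥ (eigenproj A θ *ᵥ Pi.single x 1) := by
  have h := congr_fun₂ (eigenproj_mul_eigenproj (A := A) θ θ) x x
  rw [if_pos rfl, mul_apply] at h
  rw [← h]
  simp only [mulVec_single_one, dotProduct, col_apply]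
  refine Finset.sum_congr rfl fun i _ => ?_
  rw [(eigenproj_isSymm θ).apply x i]

lemma eigenproj_apply_self_nonneg (θ : ℝ) (x : V) : 0 ≤ eigenproj A θ x x := by
  simpa [eigenproj_apply_self_eq_dotProduct] using
    dotProduct_star_self_nonneg (eigenproj A θ *ᵥ Pi.single x 1)

lemma eigenproj_apply_self_pos {θ : ℝ} {x : V} (h : eigenproj A θ *ᵥ Pi.single x 1 ≠ 0) :
    0 < eigenproj A θ x x :=
  (eigenproj_apply_self_nonneg θ x).lt_of_ne
    (by rwa [ne_comm, eigenproj_apply_self_eq_dotProduct, Ne, dotProduct_self_eq_zero])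

lemma sum_eigenproj_apply_self (hA : IsSelfAdjoint A) (x : V) :
    ∑ θ ∈ eigenvalueFinset A, eigenproj A θ x x = 1 := by
  simpa [sum_apply] using congr_fun₂ (sum_eigenproj hA) x x

end Matrix

lemma IsRelMinpoly.eq_prod_eigenSupport {V : Type*} [Fintype V] [DecidableEq V]
    {A : Matrix V V ℝ} (hA : IsSelfAdjoint A) {z : V → ℝ} {P : ℝ[X]}
    (hP : IsRelMinpoly A z P) :
    P = ∏ θ ∈ eigenSupport A z, (X - C θ) := by
  obtain ⟨hmonic, hPz, hmin⟩ := hP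
  have hQ := monic_prod_of_monic (eigenSupport A z)
    (fun θ => X - C θ) fun θ _ => monic_X_sub_C θ
  refine eq_of_monic_of_dvd_of_natDegree_le hQ hmonic ?_
    (natDegree_le_natDegree (hmin _ hQ (aeval_prod_eigenSupport_mulVec hA z)))
  refine (Multiset.prod_X_sub_C_dvd_iff_le_roots hmonic.ne_zero _).mpr
    ((Multiset.le_iff_subset (Finset.nodup _)).mpr fun θ hθ => ?_)
  exact (mem_roots hmonic.ne_zero).mpr (eval_eq_zero_of_mem_eigenSupport hA hPz hθ)

section Exp

variable {ι 𝔸 : Type*} [DecidableEq ι]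

lemma sum_smul_pow_of_orthogonal {R : Type*} [CommSemiring R] [Semiring 𝔸] [Algebra R 𝔸]
    {s : Finset ι} {F : ι → 𝔸} (hF : ∀ i ∈ s, ∀ j ∈ s, F i * F j = if i = j then F i else 0)
    (hF1 : ∑ i ∈ s, F i = 1) (c : ι → R) (n : ℕ) :
    (∑ i ∈ s, c i • F i) ^ n = ∑ i ∈ s, c i ^ n • F i := by
  induction n with
  | zero => simpa using hF1.symm
  | succ n ih =>
    rw [pow_succ, ih, Finset.sum_mul_sum]
    refine Finset.sum_congr rfl fun i hi => ?_
    rw [Finset.sum_eq_single_of_mem i hi fun j hj hji => by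
      rw [smul_mul_smul_comm, hF i hi j hj, if_neg hji.symm, smul_zero]]
    rw [smul_mul_smul_comm, hF i hi i hi, if_pos rfl, pow_succ]

lemma exp_sum_smul_of_orthogonal [NormedRing 𝔸] [NormedAlgebra ℂ 𝔸] [CompleteSpace 𝔸]
    {s : Finset ι} {F : ι → 𝔸} (hF : ∀ i ∈ s, ∀ j ∈ s, F i * F j = if i = j then F i else 0)
    (hF1 : ∑ i ∈ s, F i = 1) (c : ι → ℂ) :
    NormedSpace.exp (∑ i ∈ s, c i • F i) = ∑ i ∈ s, Complex.exp (c i) • F i := by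
  have h := hasSum_sum fun i (_ : i ∈ s) =>
    (NormedSpace.exp_series_hasSum_exp' (𝕂 := ℂ) (c i)).smul_const (F i)
  simp_rw [smul_assoc, ← Finset.smul_sum, ← sum_smul_pow_of_orthogonal hF hF1,
    ← Complex.exp_eq_exp_ℂ] at h
  exact (NormedSpace.exp_series_hasSum_exp' (𝕂 := ℂ) _).unique h

end Exp

lemma transition_eq_sum {V : Type*} [Fintype V] [DecidableEq V] {A : Matrix V V ℝ}
    (hA : IsSelfAdjoint A) (t : ℝ) :
    transition A t = ∑ θ ∈ eigenvalueFinset A,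
      Complex.exp (t * Complex.I * θ) • (eigenproj A θ).map (fun a => (a : ℂ)) := by
  let φ := (Algebra.ofId ℝ ℂ).mapMatrix (m := V)
  have hAℂ : A.map (fun a => (a : ℂ)) = ∑ θ ∈ eigenvalueFinset A, (θ : ℂ) • φ (eigenproj A θ) := by
    change φ A = _
    conv_lhs => rw [← sum_smul_eigenproj hA, map_sum]
    refine Finset.sum_congr rfl fun θ _ => ?_
    rw [map_smul, Complex.coe_smul]
  -- `NormedSpace.exp` does not depend on the norm, so any Banach algebra norm will do.
  let : NormedRing (Matrix V V ℂ) := Matrix.linftyOpNormedRing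
  let : NormedAlgebra ℂ (Matrix V V ℂ) := Matrix.linftyOpNormedAlgebra
  rw [transition, hAℂ, Finset.smul_sum]
  simp_rw [smul_smul]
  refine exp_sum_smul_of_orthogonal (fun θ _ μ _ => ?_) ?_ _
  · rw [← map_mul, eigenproj_mul_eigenproj]
    split_ifs <;> simp
  · rw [← map_sum, sum_eigenproj hA, map_one]

namespace StronglyCospectral

open Matrix

variable {V : Type*} [Fintype V] [DecidableEq V] {A : Matrix V V ℝ} {x y : V}

lemma eigenproj_mulVec_sub_or_add (hsc : StronglyCospectral A x y) (hA : IsSelfAdjoint A)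
    (θ : ℝ) : eigenproj A θ *ᵥ (Pi.single x 1 - Pi.single y 1) = 0 ∨
      eigenproj A θ *ᵥ (Pi.single x 1 + Pi.single y 1) = 0 := by
  rcases hsc θ _ (isEigenprojection_eigenproj hA θ) with h | h
  · exact Or.inl (by rw [mulVec_sub, h, sub_self])
  · exact Or.inr (by rw [mulVec_add, h, neg_add_cancel])

lemma disjoint_eigenSupport (hsc : StronglyCospectral A x y) (hA : IsSelfAdjoint A) :
    Disjoint (eigenSupport A (Pi.single x 1 + Pi.single y 1))
      (eigenSupport A (Pi.single x 1 - Pi.single y 1)) :=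
  Finset.disjoint_left.mpr fun {θ} h₁ h₂ => (hsc.eigenproj_mulVec_sub_or_add hA θ).elim
    (Finset.mem_filter.mp h₂).2 (Finset.mem_filter.mp h₁).2

lemma eigenproj_mulVec_single_ne_zero (hsc : StronglyCospectral A x y) (hA : IsSelfAdjoint A)
    {θ : ℝ} (hθ : θ ∈ eigenSupport A (Pi.single x 1 + Pi.single y 1) ∪
      eigenSupport A (Pi.single x 1 - Pi.single y 1)) :
    eigenproj A θ *ᵥ Pi.single x 1 ≠ 0 := by
  intro hx
  have hy : eigenproj A θ *ᵥ Pi.single y 1 = 0 := by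
    rcases hsc θ _ (isEigenprojection_eigenproj hA θ) with h | h
    · rw [← h, hx]
    · rw [← neg_eq_zero, ← h, hx]
  rcases Finset.mem_union.mp hθ with h | h
  · exact (Finset.mem_filter.mp h).2 (by rw [mulVec_add, hx, hy, add_zero])
  · exact (Finset.mem_filter.mp h).2 (by rw [mulVec_sub, hx, hy, sub_zero])

lemma transition_apply (hsc : StronglyCospectral A x y) (hA : IsSelfAdjoint A) (t : ℝ) :
    transition A t x y = ∑ θ ∈ eigenvalueFinset A, (eigenproj A θ x x : ℂ) *
      ((if θ ∈ eigenSupport A (Pi.single x 1 - Pi.single y 1) then -1 else 1) *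
        Complex.exp (t * Complex.I * θ)) := by
  rw [transition_eq_sum hA]
  simp only [Matrix.sum_apply, Matrix.smul_apply, map_apply, smul_eq_mul]
  refine Finset.sum_congr rfl fun θ hθ => ?_
  split_ifs with hm
  · have h := (hsc.eigenproj_mulVec_sub_or_add hA θ).resolve_left (Finset.mem_filter.mp hm).2
    rw [mulVec_add, add_eq_zero_iff_eq_neg] at h
    have hxy := congr_fun h x
    simp only [mulVec_single_one, col_apply, Pi.neg_apply] at hxy
    rw [hxy]
    push_cast
    ring
  · have h : eigenproj A θ *ᵥ (Pi.single x 1 - Pi.single y 1) = 0 := by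
      simpa [eigenSupport, hθ] using hm
    rw [mulVec_sub, sub_eq_zero] at h
    have hxy := congr_fun h x
    simp only [mulVec_single_one, col_apply] at hxy
    rw [hxy]
    ring

end StronglyCospectral

section Analytic

open Complex ComplexConjugate

variable {ι : Type*}

lemma prod_zpow_eq_zpow_sum₀ {G₀ : Type*} [CommGroupWithZero G₀] {a : G₀} (ha : a ≠ 0)
    (s : Finset ι) (l : ι → ℤ) : ∏ i ∈ s, a ^ l i = a ^ ∑ i ∈ s, l i := by
  classical
  induction s using Finset.induction_on with
  | empty => simp
  | insert i s hi ih => rw [Finset.prod_insert hi, Finset.sum_insert hi, zpow_add₀ ha, ih]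

lemma norm_pow_sub_pow_le {z w : ℂ} (hz : ‖z‖ = 1) (hw : ‖w‖ = 1) (n : ℕ) :
    ‖z ^ n - w ^ n‖ ≤ n * ‖z - w‖ := by
  induction n with
  | zero => simp
  | succ n ih =>
    calc ‖z ^ (n + 1) - w ^ (n + 1)‖ = ‖z ^ n * (z - w) + (z ^ n - w ^ n) * w‖ := by ring_nf
      _ ≤ ‖z - w‖ + n * ‖z - w‖ := by
        refine (norm_add_le _ _).trans ?_
        rw [norm_mul, norm_mul, norm_pow, hz, hw, one_pow, one_mul, mul_one]
        gcongr
      _ = (n + 1 : ℕ) * ‖z - w‖ := by push_cast; ring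

lemma norm_zpow_sub_zpow_le {z w : ℂ} (hz : ‖z‖ = 1) (hw : ‖w‖ = 1) (n : ℤ) :
    ‖z ^ n - w ^ n‖ ≤ |n| * ‖z - w‖ := by
  obtain ⟨m, rfl | rfl⟩ := n.eq_nat_or_neg
  · simpa using norm_pow_sub_pow_le hz hw m
  · have hz0 : z ^ m ≠ 0 := pow_ne_zero _ (norm_ne_zero_iff.mp (by simp [hz]))
    have hw0 : w ^ m ≠ 0 := pow_ne_zero _ (norm_ne_zero_iff.mp (by simp [hw]))
    have h : (z ^ m)⁻¹ - (w ^ m)⁻¹ = -((z ^ m - w ^ m) / (z ^ m * w ^ m)) := by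
      field_simp
      ring
    simpa [h, norm_pow, hz, hw] using norm_pow_sub_pow_le hz hw m

lemma norm_prod_sub_prod_le (s : Finset ι) {u v : ι → ℂ} (hu : ∀ i ∈ s, ‖u i‖ = 1)
    (hv : ∀ i ∈ s, ‖v i‖ = 1) :
    ‖∏ i ∈ s, u i - ∏ i ∈ s, v i‖ ≤ ∑ i ∈ s, ‖u i - v i‖ := by
  classical
  induction s using Finset.induction_on with
  | empty => simp
  | insert a s ha ih =>
    simp only [Finset.mem_insert, forall_eq_or_imp] at hu hv
    rw [Finset.prod_insert ha, Finset.prod_insert ha, Finset.sum_insert ha]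
    calc ‖u a * ∏ i ∈ s, u i - v a * ∏ i ∈ s, v i‖
        = ‖(u a - v a) * ∏ i ∈ s, u i + v a * (∏ i ∈ s, u i - ∏ i ∈ s, v i)‖ := by ring_nf
      _ ≤ ‖u a - v a‖ + ∑ i ∈ s, ‖u i - v i‖ := by
        refine (norm_add_le _ _).trans ?_
        rw [norm_mul, norm_mul, norm_prod, Finset.prod_eq_one hu.2, hv.1, mul_one, one_mul]
        gcongr
        exact ih hu.2 hv.2

lemma exists_sum_mul_norm_sub_sq_eq (s : Finset ι) (p : ι → ℝ) (hp : ∑ i ∈ s, p i = 1)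
    {z : ι → ℂ} (hz : ∀ i ∈ s, ‖z i‖ = 1) :
    ∃ γ : ℂ, ‖γ‖ = 1 ∧ ∑ i ∈ s, p i * ‖z i - γ‖ ^ 2 = 2 * (1 - ‖∑ i ∈ s, p i * z i‖) := by
  set U := ∑ i ∈ s, p i * z i
  set γ := exp (arg U * I)
  have hγ : ‖γ‖ = 1 := norm_exp_ofReal_mul_I _
  have hU : (U * conj γ).re = ‖U‖ := by
    conv_lhs => rw [← norm_mul_exp_arg_mul_I U]
    rw [mul_assoc, mul_conj, ← Complex.sq_norm, hγ]
    simp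
  have hi : ∀ i ∈ s, p i * ‖z i - γ‖ ^ 2 = 2 * p i - 2 * (p i * z i * conj γ).re := by
    intro i hi
    rw [Complex.sq_norm, normSq_sub, ← Complex.sq_norm, ← Complex.sq_norm, hz i hi, hγ, mul_assoc,
      re_ofReal_mul]
    ring
  refine ⟨γ, hγ, ?_⟩
  rw [Finset.sum_congr rfl hi, Finset.sum_sub_distrib, ← Finset.mul_sum, ← Finset.mul_sum, hp,
    ← re_sum, ← Finset.sum_mul, hU]
  ring

lemma exists_norm_sum_le_one_sub (s : Finset ι) {p : ι → ℝ} (hp : ∀ i ∈ s, 0 ≤ p i)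
    (hp1 : ∑ i ∈ s, p i = 1) {l : ι → ℤ} (hl : ∀ i ∈ s, l i ≠ 0 → 0 < p i)
    (hl0 : ∑ i ∈ s, l i = 0) :
    ∃ ε > 0, ∀ z : ι → ℂ, (∀ i ∈ s, ‖z i‖ = 1) → ∏ i ∈ s, z i ^ l i = -1 →
      ‖∑ i ∈ s, p i * z i‖ ≤ 1 - ε := by
  set C := ∑ i ∈ s, |(l i : ℝ)| * √(2 / p i)
  refine ⟨4 / (C ^ 2 + 1), by positivity, fun z hz hprod => ?_⟩
  obtain ⟨γ, hγ, hsum⟩ := exists_sum_mul_norm_sub_sq_eq s p hp1 hz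
  set δ := 1 - ‖∑ i ∈ s, p i * z i‖
  have hδ : 0 ≤ δ := by
    have := Finset.sum_nonneg fun i hi => mul_nonneg (hp i hi) (sq_nonneg ‖z i - γ‖)
    linarith
  have hclose : ∀ i ∈ s, |(l i : ℝ)| * ‖z i - γ‖ ≤ |(l i : ℝ)| * √(2 / p i) * √δ := by
    intro i hi
    rcases eq_or_ne (l i) 0 with h0 | h0
    · simp [h0]
    have hpi := hl i hi h0
    have hi' : p i * ‖z i - γ‖ ^ 2 ≤ 2 * δ := hsum ▸ Finset.single_le_sum
      (f := fun i => p i * ‖z i - γ‖ ^ 2) (fun j hj => mul_nonneg (hp j hj) (sq_nonneg _)) hi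
    rw [mul_assoc, ← Real.sqrt_mul (by positivity)]
    gcongr
    refine Real.le_sqrt_of_sq_le ?_
    rw [div_mul_eq_mul_div, le_div_iff₀ hpi]
    linarith
  have h2 : 2 ≤ C * √δ := calc
    (2 : ℝ) = ‖∏ i ∈ s, z i ^ l i - ∏ i ∈ s, γ ^ l i‖ := by
      rw [hprod, prod_zpow_eq_zpow_sum₀ (norm_ne_zero_iff.mp (by simp [hγ])) s l, hl0, zpow_zero]
      norm_num
    _ ≤ ∑ i ∈ s, ‖z i ^ l i - γ ^ l i‖ :=
      norm_prod_sub_prod_le s (fun i hi => by simp [hz i hi]) (fun _ _ => by simp [hγ])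
    _ ≤ ∑ i ∈ s, |(l i : ℝ)| * ‖z i - γ‖ := Finset.sum_le_sum fun i hi => by
      exact_mod_cast norm_zpow_sub_zpow_le (hz i hi) hγ (l i)
    _ ≤ C * √δ := by
      rw [Finset.sum_mul]
      exact Finset.sum_le_sum hclose
  rw [le_sub_comm, div_le_iff₀ (by positivity)]
  nlinarith [Real.sq_sqrt hδ, sq_nonneg C]

lemma exists_norm_sum_sign_mul_exp_le {s R : Finset ℝ} (hR : R ⊆ s) {p : ℝ → ℝ}
    (hp : ∀ θ ∈ s, 0 ≤ p θ) (hp1 : ∑ θ ∈ s, p θ = 1) {l : ℝ → ℤ}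
    (hl : ∀ θ ∈ s, l θ ≠ 0 → 0 < p θ) (hl0 : ∑ θ ∈ s, l θ = 0)
    (hl1 : ∑ θ ∈ s, (l θ : ℝ) * θ = 0) (hodd : Odd (∑ θ ∈ R, l θ)) :
    ∃ ε > 0, ∀ t : ℝ,
      ‖∑ θ ∈ s, (p θ : ℂ) * ((if θ ∈ R then -1 else 1) * exp (t * I * θ))‖ ≤ 1 - ε := by
  obtain ⟨ε, hε, h⟩ := exists_norm_sum_le_one_sub s hp hp1 hl hl0
  refine ⟨ε, hε, fun t => h _ (fun θ _ => ?_) ?_⟩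
  · rw [norm_mul, norm_exp]
    split_ifs <;> simp
  have hexp : ∏ θ ∈ s, exp (t * I * θ) ^ l θ = 1 := by
    simp_rw [← exp_int_mul, ← exp_sum]
    rw [← exp_zero]
    congr 1
    calc ∑ θ ∈ s, (l θ : ℂ) * (t * I * θ) = t * I * ((∑ θ ∈ s, (l θ : ℝ) * θ : ℝ) : ℂ) := by
          push_cast
          rw [Finset.mul_sum]
          exact Finset.sum_congr rfl fun θ _ => by ring
      _ = 0 := by rw [hl1, ofReal_zero, mul_zero]
  have hsign : ∏ θ ∈ s, (if θ ∈ R then (-1 : ℂ) else 1) ^ l θ = -1 := by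
    calc ∏ θ ∈ s, (if θ ∈ R then (-1 : ℂ) else 1) ^ l θ
        = ∏ θ ∈ s, if θ ∈ R then (-1 : ℂ) ^ l θ else 1 :=
          Finset.prod_congr rfl fun θ _ => by split_ifs <;> simp
      _ = -1 := by
        rw [Finset.prod_ite_mem, Finset.inter_eq_right.mpr hR,
          prod_zpow_eq_zpow_sum₀ (by norm_num), hodd.neg_one_zpow]
  simp_rw [mul_zpow, Finset.prod_mul_distrib, hexp, hsign, mul_one]

end Analytic

open Finset in
lemma exists_odd_int_relation {s R₁ R₂ Tf Tg Th : Finset ℝ} (hR₁ : R₁ ⊆ s) (hR₂ : R₂ ⊆ s)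
    (hR : Disjoint R₁ R₂) (hf : Tf ⊆ R₁) (hg : Tg ⊆ R₁) (hh : Th ⊆ R₂) {tf tg th : ℤ}
    (htf : ∑ θ ∈ Tf, θ = tf) (htg : ∑ θ ∈ Tg, θ = tg) (hth : ∑ θ ∈ Th, θ = th)
    (hk : Odd #Th) (hmix : Odd (tf * #Tg - tg * #Tf)) :
    ∃ l : ℝ → ℤ, (∀ θ, l θ ≠ 0 → θ ∈ R₁ ∪ R₂) ∧ ∑ θ ∈ s, l θ = 0 ∧
      ∑ θ ∈ s, (l θ : ℝ) * θ = 0 ∧ Odd (∑ θ ∈ R₁, l θ) ∧ Odd (∑ θ ∈ R₂, l θ) := by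
  -- `(a, b, c) = (tf, tg, th) × (#Tf, #Tg, #Th)`, orthogonal to both factors.
  set a : ℤ := #Th * tg - #Tg * th
  set b : ℤ := #Tf * th - #Th * tf
  set c : ℤ := tf * #Tg - tg * #Tf
  set l : ℝ → ℤ := fun θ =>
    (if θ ∈ Tf then a else 0) + (if θ ∈ Tg then b else 0) + (if θ ∈ Th then c else 0)
  have hsum : ∀ r : Finset ℝ, ∑ θ ∈ r, l θ = a * #(r ∩ Tf) + b * #(r ∩ Tg) + c * #(r ∩ Th) := by
    intro r
    simp only [l, sum_add_distrib, sum_ite_mem, sum_const, nsmul_eq_mul]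
    ring
  have hmoment : ∀ r : Finset ℝ, ∑ θ ∈ r, (l θ : ℝ) * θ =
      a * ∑ θ ∈ r ∩ Tf, θ + b * ∑ θ ∈ r ∩ Tg, θ + c * ∑ θ ∈ r ∩ Th, θ := by
    intro r
    simp only [l, Int.cast_add, Int.cast_ite, Int.cast_zero, add_mul, ite_mul, zero_mul,
      sum_add_distrib, sum_ite_mem, mul_sum]
  have hs : ∀ {T}, T ⊆ R₁ ∪ R₂ → s ∩ T = T := fun hT =>
    inter_eq_right.mpr (hT.trans (union_subset hR₁ hR₂))
  have h₁ : ∀ {T}, T ⊆ R₁ → R₂ ∩ T = ∅ := fun hT =>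
    disjoint_iff_inter_eq_empty.mp (hR.symm.mono_right hT)
  have h₂ : ∀ {T}, T ⊆ R₂ → R₁ ∩ T = ∅ := fun hT =>
    disjoint_iff_inter_eq_empty.mp (hR.mono_right hT)
  refine ⟨l, fun θ hθ => ?_, ?_, ?_, ?_, ?_⟩
  · contrapose! hθ
    simp only [mem_union, not_or] at hθ
    have hθf : θ ∉ Tf := fun h => hθ.1 (hf h)
    have hθg : θ ∉ Tg := fun h => hθ.1 (hg h)
    have hθh : θ ∉ Th := fun h => hθ.2 (hh h)
    simp [l, hθf, hθg, hθh]
  · rw [hsum, hs (hf.trans subset_union_left), hs (hg.trans subset_union_left),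
      hs (hh.trans subset_union_right)]
    ring
  · rw [hmoment, hs (hf.trans subset_union_left), hs (hg.trans subset_union_left),
      hs (hh.trans subset_union_right), htf, htg, hth]
    push_cast [a, b, c]
    ring
  · rw [hsum, inter_eq_right.mpr hf, inter_eq_right.mpr hg, h₂ hh, card_empty, Nat.cast_zero,
      mul_zero, add_zero, show a * #Tf + b * #Tg = -(c * #Th) by ring]
    exact (hmix.mul hk.natCast).neg
  · rw [hsum, h₁ hf, h₁ hg, inter_eq_right.mpr hh, card_empty, Nat.cast_zero, mul_zero, mul_zero,
      zero_add, zero_add]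
    exact hmix.mul hk.natCast

lemma exists_odd_int_relation_of_dvd {s R₁ R₂ : Finset ℝ} (hR₁ : R₁ ⊆ s) (hR₂ : R₂ ⊆ s)
    (hR : Disjoint R₁ R₂) {f g h : ℝ[X]} (hf : f.Monic) (hg : g.Monic) (hh : h.Monic)
    (hfg : f * g ∣ ∏ θ ∈ R₁, (X - C θ)) (hhR : h ∣ ∏ θ ∈ R₂, (X - C θ))
    (hfdeg : 1 ≤ f.natDegree) (hgdeg : 1 ≤ g.natDegree) (hhdeg : Odd h.natDegree)
    {tf tg th : ℤ} (htf : (tf : ℝ) = ptrace f) (htg : (tg : ℝ) = ptrace g)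
    (hth : (th : ℝ) = ptrace h) (hmix : Odd (tf * (g.natDegree : ℤ) - tg * (f.natDegree : ℤ))) :
    ∃ l : ℝ → ℤ, (∀ θ, l θ ≠ 0 → θ ∈ R₁ ∪ R₂) ∧ ∑ θ ∈ s, l θ = 0 ∧
      ∑ θ ∈ s, (l θ : ℝ) * θ = 0 ∧ Odd (∑ θ ∈ R₁, l θ) ∧ Odd (∑ θ ∈ R₂, l θ) := by
  obtain ⟨Tf, hTf, rfl⟩ := exists_subset_eq_prod_X_sub_C_of_dvd hf (dvd_of_mul_right_dvd hfg)
  obtain ⟨Tg, hTg, rfl⟩ := exists_subset_eq_prod_X_sub_C_of_dvd hg (dvd_of_mul_left_dvd hfg)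
  obtain ⟨Th, hTh, rfl⟩ := exists_subset_eq_prod_X_sub_C_of_dvd hh hhR
  simp only [natDegree_finsetProd_X_sub_C_eq_card] at hfdeg hgdeg hhdeg hmix
  rw [ptrace_prod_X_sub_C (Finset.card_pos.mp hfdeg)] at htf
  rw [ptrace_prod_X_sub_C (Finset.card_pos.mp hgdeg)] at htg
  rw [ptrace_prod_X_sub_C (Finset.card_pos.mp hhdeg.pos)] at hth
  exact exists_odd_int_relation hR₁ hR₂ hR hTf hTg hTh htf.symm htg.symm hth.symm hhdeg hmix

theorem stmt_2_general {V : Type*} [Fintype V] [DecidableEq V]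
    (A : Matrix V V ℝ) (hA : A.IsSymm) (x y : V)
    (hsc : StronglyCospectral A x y)
    (Pp Pm : Polynomial ℝ)
    (hPp : IsRelMinpoly A (Pi.single x 1 + Pi.single y 1) Pp)
    (hPm : IsRelMinpoly A (Pi.single x 1 - Pi.single y 1) Pm)
    (f g h : Polynomial ℝ) (hf : f.Monic) (hg : g.Monic) (hh : h.Monic)
    (hfdeg : 1 ≤ f.natDegree) (hgdeg : 1 ≤ g.natDegree) (hhdeg : Odd h.natDegree)
    (tf tg th : ℤ) (htf : (tf : ℝ) = ptrace f) (htg : (tg : ℝ) = ptrace g)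
    (hth : (th : ℝ) = ptrace h)
    (hmix : Odd (tf * (g.natDegree : ℤ) - tg * (f.natDegree : ℤ)))
    (hdvd : (f * g ∣ Pp ∧ h ∣ Pm) ∨ (f * g ∣ Pm ∧ h ∣ Pp)) :
    ¬ PGST A x y := by
  have hA' : IsSelfAdjoint A := isHermitian_iff_isSymm.mpr hA
  set Φp := eigenSupport A (Pi.single x 1 + Pi.single y 1)
  set Φm := eigenSupport A (Pi.single x 1 - Pi.single y 1)
  have hdisj : Disjoint Φp Φm := hsc.disjoint_eigenSupport hA'
  obtain ⟨l, hsupp, hl0, hl1, hodd⟩ : ∃ l : ℝ → ℤ, (∀ θ, l θ ≠ 0 → θ ∈ Φp ∪ Φm) ∧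
      ∑ θ ∈ eigenvalueFinset A, l θ = 0 ∧ ∑ θ ∈ eigenvalueFinset A, (l θ : ℝ) * θ = 0 ∧
      Odd (∑ θ ∈ Φm, l θ) := by
    rw [hPp.eq_prod_eigenSupport hA', hPm.eq_prod_eigenSupport hA'] at hdvd
    rcases hdvd with ⟨hfg, hhΦ⟩ | ⟨hfg, hhΦ⟩
    · obtain ⟨l, h₁, h₂, h₃, -, h₄⟩ := exists_odd_int_relation_of_dvd (Finset.filter_subset _ _)
        (Finset.filter_subset _ _) hdisj hf hg hh hfg hhΦ hfdeg hgdeg hhdeg htf htg hth hmix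
      exact ⟨l, h₁, h₂, h₃, h₄⟩
    · obtain ⟨l, h₁, h₂, h₃, h₄, -⟩ := exists_odd_int_relation_of_dvd (Finset.filter_subset _ _)
        (Finset.filter_subset _ _) hdisj.symm hf hg hh hfg hhΦ hfdeg hgdeg hhdeg htf htg hth hmix
      exact ⟨l, fun θ hθ => Finset.union_comm Φm Φp ▸ h₁ θ hθ, h₂, h₃, h₄⟩
  obtain ⟨ε, hε, hU⟩ := exists_norm_sum_sign_mul_exp_le (R := Φm) (Finset.filter_subset _ _)
    (fun θ _ => eigenproj_apply_self_nonneg θ x) (sum_eigenproj_apply_self hA' x)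
    (fun θ _ hθ => eigenproj_apply_self_pos (hsc.eigenproj_mulVec_single_ne_zero hA' (hsupp θ hθ)))
    hl0 hl1 hodd
  intro hpgst
  obtain ⟨t, -, ht⟩ := hpgst ε hε
  rw [hsc.transition_apply hA'] at ht
  linarith [hU t]

theorem stmt_2 {V : Type*} [Fintype V] [DecidableEq V]
    (A : Matrix V V ℝ) (hA : A.IsSymm) (x y : V) (hxy : x ≠ y)
    (hsc : StronglyCospectral A x y)
    (Pp Pm : Polynomial ℝ)
    (hPp : IsRelMinpoly A (Pi.single x 1 + Pi.single y 1) Pp)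
    (hPm : IsRelMinpoly A (Pi.single x 1 - Pi.single y 1) Pm)
    (f g h : Polynomial ℝ) (hf : f.Monic) (hg : g.Monic) (hh : h.Monic)
    (hfdeg : 1 ≤ f.natDegree) (hgdeg : 1 ≤ g.natDegree) (hhdeg : Odd h.natDegree)
    (tf tg th : ℤ) (htf : (tf : ℝ) = ptrace f) (htg : (tg : ℝ) = ptrace g)
    (hth : (th : ℝ) = ptrace h)
    (htfodd : Odd tf) (hmix : Odd (tf * (g.natDegree : ℤ) - tg * (f.natDegree : ℤ)))
    (hdvd : (f * g ∣ Pp ∧ h ∣ Pm) ∨ (f * g ∣ Pm ∧ h ∣ Pp)) :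
    ¬ PGST A x y :=
  stmt_2_general A hA x y hsc Pp Pm hPp hPm f g h hf hg hh hfdeg hgdeg hhdeg tf tg th htf htg hth
    hmix hdvd
end

section
/- Let N ≥ 2, let M satisfy 1 ≤ M ≤ N/2 with M even, and let w be a real number transcendental over ℚ. Then the modified path P_N^{(M,w)} does not have pretty good state transfer between vertices 1 and N. -/
/-
For even `M` the adjacency matrix `A` of `P_N^{(M,w)}` has an explicit kernel vector `v`,
supported on vertex `0` and the odd path vertices `1, 3, …, M - 1`, with `v 1 = ±w ≠ 0` and
`v N = 0`. Every `U(t) = exp(i t A)` is unitary and fixes `v`, so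
`v 1 = ∑_{j ≠ N} U(t)_{1 j} v j`, and Cauchy–Schwarz together with the unit norm of row `1` of
`U(t)` gives `|v 1|² ≤ (1 - |U(t)_{1 N}|²) ‖v‖²`. Hence `|U(t)_{1 N}|` stays bounded away
from `1`.
-/

open Matrix Polynomial

/-- The adjacency matrix of the modified path `P_N^{(M,w)}` on vertices `0, 1, …, N+1`:
a path on vertices `1, …, N`, with extra vertex `0` joined to vertex `M` and extra vertex
`N+1` joined to vertex `N+1-M`, each by an edge of weight `w`. -/
def modPathAdj (N M : ℕ) (w : ℝ) : Matrix (Fin (N + 2)) (Fin (N + 2)) ℝ :=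
  Matrix.of fun i j =>
    if (1 ≤ (i : ℕ) ∧ (i : ℕ) ≤ N - 1 ∧ (j : ℕ) = (i : ℕ) + 1) ∨
       (1 ≤ (j : ℕ) ∧ (j : ℕ) ≤ N - 1 ∧ (i : ℕ) = (j : ℕ) + 1) then 1
    else if ((i : ℕ) = 0 ∧ (j : ℕ) = M) ∨ ((j : ℕ) = 0 ∧ (i : ℕ) = M) then w
    else if ((i : ℕ) = N + 1 - M ∧ (j : ℕ) = N + 1) ∨
            ((j : ℕ) = N + 1 - M ∧ (i : ℕ) = N + 1) then w
    else 0

theorem NormedSpace.exp_mul_eq_self_of_mul_eq_zero {𝕂 𝔸 : Type*} [RCLike 𝕂] [NormedRing 𝔸]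
    [NormedAlgebra 𝕂 𝔸] [CompleteSpace 𝔸] {x p : 𝔸} (h : x * p = 0) : exp x * p = p := by
  rw [exp_eq_tsum 𝕂, ← (expSeries_summable' (𝕂 := 𝕂) x).tsum_mul_right, tsum_eq_single 0]
  · simp
  · intro k hk
    obtain ⟨k, rfl⟩ := Nat.exists_eq_succ_of_ne_zero hk
    rw [smul_mul_assoc, pow_succ, mul_assoc, h, mul_zero, smul_zero]

open scoped Norms.Operator in
theorem Matrix.exp_mulVec_eq_self_of_mulVec_eq_zero {n 𝕜 : Type*} [Fintype n] [DecidableEq n]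
    [RCLike 𝕜] {X : Matrix n n 𝕜} {v : n → 𝕜} (h : X *ᵥ v = 0) :
    NormedSpace.exp X *ᵥ v = v := by
  have hX : X * (of fun i (_ : n) => v i) = 0 := by
    ext i j
    exact congrFun h i
  funext i
  exact ext_iff.mpr (NormedSpace.exp_mul_eq_self_of_mul_eq_zero (𝕂 := 𝕜) hX) i i

theorem Matrix.sum_norm_sq_row_eq_one_of_mem_unitaryGroup {n 𝕜 : Type*} [Fintype n]
    [DecidableEq n] [RCLike 𝕜] {U : Matrix n n 𝕜} (hU : U ∈ unitaryGroup n 𝕜) (i : n) :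
    ∑ j, ‖U i j‖ ^ 2 = 1 := by
  have h : (U * star U) i i = (1 : Matrix n n 𝕜) i i := by rw [Unitary.mul_star_self_of_mem hU]
  simp only [star_eq_conjTranspose, mul_apply, conjTranspose_apply, ← starRingEnd_apply,
    RCLike.mul_conj, one_apply_eq] at h
  exact_mod_cast h

theorem Matrix.norm_sq_apply_le_of_mulVec_eq_self {n 𝕜 : Type*} [Fintype n] [DecidableEq n]
    [RCLike 𝕜] {U : Matrix n n 𝕜} (hU : U ∈ unitaryGroup n 𝕜) {v : n → 𝕜}
    (hv : U *ᵥ v = v) {x y : n} (hy : v y = 0) :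
    ‖v x‖ ^ 2 ≤ (1 - ‖U x y‖ ^ 2) * ∑ j, ‖v j‖ ^ 2 := by
  set s := Finset.univ.erase y
  have hvx : v x = ∑ j ∈ s, U x j * v j := by
    rw [← congrFun hv x, mulVec, dotProduct, Finset.sum_erase _ (by simp [hy])]
  have hrow : ∑ j ∈ s, ‖U x j‖ ^ 2 = 1 - ‖U x y‖ ^ 2 := by
    rw [← sum_norm_sq_row_eq_one_of_mem_unitaryGroup hU x,
      ← Finset.sum_erase_add _ _ (Finset.mem_univ y)]
    ring
  calc ‖v x‖ ^ 2 ≤ (∑ j ∈ s, ‖U x j‖ * ‖v j‖) ^ 2 := by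
        gcongr
        rw [hvx]
        exact (norm_sum_le _ _).trans_eq (by simp_rw [norm_mul])
    _ ≤ (∑ j ∈ s, ‖U x j‖ ^ 2) * ∑ j ∈ s, ‖v j‖ ^ 2 := Finset.sum_mul_sq_le_sq_mul_sq _ _ _
    _ ≤ (1 - ‖U x y‖ ^ 2) * ∑ j, ‖v j‖ ^ 2 := by
        rw [hrow]
        have : 0 ≤ 1 - ‖U x y‖ ^ 2 := hrow ▸ Finset.sum_nonneg fun _ _ => sq_nonneg _
        gcongr
        exact Finset.subset_univ _

section transition

variable {V : Type*} [Fintype V] [DecidableEq V] {A : Matrix V V ℝ}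

theorem transition_mem_unitaryGroup (hA : A.IsSymm) (t : ℝ) :
    transition A t ∈ unitaryGroup V ℂ := by
  set X := ((t : ℂ) * Complex.I) • A.map ((↑) : ℝ → ℂ)
  have hH : (A.map ((↑) : ℝ → ℂ))ᴴ = A.map (↑) := by
    ext i j
    simp [hA.apply]
  have hskew : Xᴴ = -X := by
    rw [conjTranspose_smul, hH, ← neg_smul]
    congr 1
    simp [Complex.conj_ofReal]
  rw [transition, mem_unitaryGroup_iff, star_eq_conjTranspose, ← exp_conjTranspose, hskew,
    ← exp_add_of_commute _ _ (Commute.refl X).neg_right, add_neg_cancel, NormedSpace.exp_zero]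

theorem transition_mulVec_of_mulVec_eq_zero {v : V → ℝ} (hv : A *ᵥ v = 0) (t : ℝ) :
    transition A t *ᵥ (fun j => (v j : ℂ)) = fun j => (v j : ℂ) := by
  have h : A.map ((↑) : ℝ → ℂ) *ᵥ (fun j => (v j : ℂ)) = 0 := by
    funext i
    have := congrFun hv i
    simp only [mulVec, dotProduct, map_apply, Pi.zero_apply] at this ⊢
    exact_mod_cast this
  exact exp_mulVec_eq_self_of_mulVec_eq_zero (by rw [smul_mulVec, h, smul_zero])

theorem not_PGST_of_mulVec_eq_zero (hA : A.IsSymm) {v : V → ℝ} (hv : A *ᵥ v = 0) {x y : V}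
    (hx : v x ≠ 0) (hy : v y = 0) : ¬ PGST A x y := by
  set S := ∑ j, ‖(v j : ℂ)‖ ^ 2
  have ha : 0 < ‖(v x : ℂ)‖ ^ 2 := pow_pos (norm_pos_iff.mpr (Complex.ofReal_ne_zero.mpr hx)) 2
  have hS : ‖(v x : ℂ)‖ ^ 2 ≤ S := Finset.single_le_sum (f := fun j => ‖(v j : ℂ)‖ ^ 2)
    (fun _ _ => sq_nonneg _) (Finset.mem_univ x)
  have hSpos := ha.trans_le hS
  intro hPGST
  -- `‖v x‖² ≤ (1 - ‖U x y‖²) S` keeps `‖U x y‖` below `1 - ‖v x‖² / (2 S)` for every `t`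
  obtain ⟨t, -, ht⟩ := hPGST (‖(v x : ℂ)‖ ^ 2 / (2 * S)) (by positivity)
  have hU := transition_mem_unitaryGroup hA t
  have hbound := norm_sq_apply_le_of_mulVec_eq_self hU
    (transition_mulVec_of_mulVec_eq_zero hv t) (x := x) (y := y) (by simp [hy])
  have hle := entry_norm_bound_of_unitary hU x y
  have h1 : 2 * S * (1 - ‖transition A t x y‖) < ‖(v x : ℂ)‖ ^ 2 := by
    have := mul_lt_mul_of_pos_left (sub_lt_comm.mp ht) (by positivity : 0 < 2 * S)
    rwa [mul_div_cancel₀ _ (by positivity)] at this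
  nlinarith [mul_nonneg (sq_nonneg (1 - ‖transition A t x y‖)) hSpos.le]

end transition

/-- Along `1, 3, …, M - 1, 0` the entries alternate in sign (`±w`, then `±1` at `0`, since the edge
`M — 0` has weight `w`), so each row `2, 4, …, M` of `modPathAdj` has two cancelling nonzero
terms and every other row has none. -/
noncomputable def modPathKernelVec (M : ℕ) (w : ℝ) {n : ℕ} : Fin n → ℝ := fun j =>
  if (j : ℕ) = 0 then (if M % 4 = 0 then 1 else -1)
  else if (j : ℕ) % 2 = 1 ∧ (j : ℕ) < M then (if (j : ℕ) % 4 = 1 then w else -w)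
  else 0

section modPath

variable {N M n : ℕ} {w : ℝ}

theorem modPathKernelVec_of_eq_zero {j : Fin n} (hj : (j : ℕ) = 0) :
    modPathKernelVec M w j = if M % 4 = 0 then 1 else -1 :=
  if_pos hj

theorem modPathKernelVec_of_odd {j : Fin n} (hj : (j : ℕ) % 2 = 1) (hjM : (j : ℕ) < M) :
    modPathKernelVec M w j = if (j : ℕ) % 4 = 1 then w else -w := by
  rw [modPathKernelVec, if_neg (by omega), if_pos ⟨hj, hjM⟩]

theorem modPathKernelVec_ne_zero {j : Fin n} (h : modPathKernelVec M w j ≠ 0) :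
    (j : ℕ) = 0 ∨ (j : ℕ) % 2 = 1 ∧ (j : ℕ) < M := by
  by_contra hj
  exact h (by rw [modPathKernelVec, if_neg (hj ∘ Or.inl), if_neg (hj ∘ Or.inr)])

theorem modPathAdj_ne_zero {i j : Fin (N + 2)} (h : modPathAdj N M w i j ≠ 0) :
    (1 ≤ (i : ℕ) ∧ (i : ℕ) ≤ N - 1 ∧ (j : ℕ) = (i : ℕ) + 1) ∨
      (1 ≤ (j : ℕ) ∧ (j : ℕ) ≤ N - 1 ∧ (i : ℕ) = (j : ℕ) + 1) ∨
      ((i : ℕ) = 0 ∧ (j : ℕ) = M) ∨ ((j : ℕ) = 0 ∧ (i : ℕ) = M) ∨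
      ((i : ℕ) = N + 1 - M ∧ (j : ℕ) = N + 1) ∨ ((j : ℕ) = N + 1 - M ∧ (i : ℕ) = N + 1) := by
  unfold modPathAdj at h
  rw [of_apply] at h
  split_ifs at h with h1 h2 h3
  · exact h1.imp_right Or.inl
  · exact Or.inr (Or.inr (h2.imp_right Or.inl))
  · exact Or.inr (Or.inr (Or.inr (Or.inr h3)))
  · exact absurd rfl h

theorem modPathAdj_of_succ_eq {i j : Fin (N + 2)} (hj : 1 ≤ (j : ℕ)) (hjN : (j : ℕ) ≤ N - 1)
    (hij : (i : ℕ) = j + 1) : modPathAdj N M w i j = 1 :=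
  if_pos (Or.inr ⟨hj, hjN, hij⟩)

theorem modPathAdj_of_eq_succ {i j : Fin (N + 2)} (hi : 1 ≤ (i : ℕ)) (hiN : (i : ℕ) ≤ N - 1)
    (hij : (j : ℕ) = i + 1) : modPathAdj N M w i j = 1 :=
  if_pos (Or.inl ⟨hi, hiN, hij⟩)

theorem modPathAdj_of_eq_zero {i j : Fin (N + 2)} (hi : (i : ℕ) = M) (hj : (j : ℕ) = 0) :
    modPathAdj N M w i j = w := by
  rw [modPathAdj, of_apply, if_neg (by omega), if_pos (Or.inr ⟨hj, hi⟩)]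

theorem modPathAdj_isSymm (N M : ℕ) (w : ℝ) : (modPathAdj N M w).IsSymm := by
  ext i j
  simp only [transpose_apply, modPathAdj, of_apply, or_comm]

theorem modPathAdj_mulVec_modPathKernelVec (hM : 2 ≤ M) (hMN : 2 * M ≤ N) (hMe : Even M) :
    modPathAdj N M w *ᵥ modPathKernelVec M w = 0 := by
  have hM2 : M % 2 = 0 := Nat.even_iff.mp hMe
  funext i
  simp only [mulVec, dotProduct, Pi.zero_apply]
  have hsupp := fun j (h : modPathAdj N M w i j * modPathKernelVec M w j ≠ 0) =>
    And.intro (modPathAdj_ne_zero (left_ne_zero_of_mul h))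
      (modPathKernelVec_ne_zero (right_ne_zero_of_mul h))
  by_cases hi : (i : ℕ) % 2 = 0 ∧ 2 ≤ (i : ℕ) ∧ (i : ℕ) ≤ M
  · obtain ⟨a, ha⟩ : ∃ a : Fin (N + 2), (a : ℕ) + 1 = i := ⟨⟨i - 1, by omega⟩, by simp; omega⟩
    have hia : modPathAdj N M w i a = 1 := modPathAdj_of_succ_eq (by omega) (by omega) ha.symm
    have hva : modPathKernelVec M w a = if (a : ℕ) % 4 = 1 then w else -w :=
      modPathKernelVec_of_odd (by omega) (by omega)
    have hvanish : ∀ j : Fin (N + 2), j ≠ a →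
        ((j : ℕ) ≠ if (i : ℕ) = M then 0 else (i : ℕ) + 1) →
        modPathAdj N M w i j * modPathKernelVec M w j = 0 := by
      intro j hja hjb
      by_contra h
      have := hsupp j h
      have := Fin.val_injective.ne hja
      split_ifs at hjb <;> omega
    rcases hi.2.2.eq_or_lt with hiM | hiM
    · obtain ⟨b, hb⟩ : ∃ b : Fin (N + 2), (b : ℕ) = 0 := ⟨⟨0, by omega⟩, rfl⟩
      rw [Fintype.sum_eq_add a b (Fin.ne_of_val_ne (by omega)) fun j hj => hvanish j hj.1
          (by rw [if_pos hiM, ← hb]; exact Fin.val_injective.ne hj.2),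
        hia, hva, modPathAdj_of_eq_zero hiM hb, modPathKernelVec_of_eq_zero hb]
      split_ifs <;> first | ring1 | omega
    · obtain ⟨b, hb⟩ : ∃ b : Fin (N + 2), (b : ℕ) = i + 1 := ⟨⟨i + 1, by omega⟩, rfl⟩
      rw [Fintype.sum_eq_add a b (Fin.ne_of_val_ne (by omega)) fun j hj => hvanish j hj.1
          (by rw [if_neg hiM.ne, ← hb]; exact Fin.val_injective.ne hj.2),
        hia, hva, modPathAdj_of_eq_succ (by omega) (by omega) hb,
        modPathKernelVec_of_odd (j := b) (by omega) (by omega)]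
      split_ifs <;> first | ring1 | omega
  · refine Finset.sum_eq_zero fun j _ => ?_
    by_contra h
    have := hsupp j h
    omega

end modPath

theorem stmt_5 (N M : ℕ) (hM1 : 1 ≤ M) (hM2 : 2 * M ≤ N)
    (hMe : Even M) (w : ℝ) (hw : Transcendental ℚ w) :
    ¬ PGST (modPathAdj N M w) ⟨1, by omega⟩ ⟨N, by omega⟩ := by
  have hM : 2 ≤ M := by obtain ⟨k, rfl⟩ := hMe; omega
  refine not_PGST_of_mulVec_eq_zero (modPathAdj_isSymm N M w)
    (modPathAdj_mulVec_modPathKernelVec hM hM2 hMe) ?_ ?_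
  · rw [modPathKernelVec_of_odd rfl (by simp only; omega), if_pos (by rfl)]
    exact fun h => hw (h ▸ isAlgebraic_zero)
  · rw [modPathKernelVec, if_neg (by simp only; omega), if_neg (by simp only; omega)]
end

section
/- Let W = C₄ ∨ K₁ be the wheel on 5 vertices, obtained by joining a single new vertex to every vertex of the 4-cycle C₄. Then for any pair of non-adjacent vertices x, y of W, there is no pretty good state transfer from x to y. -/
/-!
The spectrum of the wheel is `{-2, 0, 0, 1 ± √5}`. For non-adjacent `x, y` the spectral
decomposition gives `U(t)_{xy} = -1/2 + a e^{-2it} + b e^{i(1+√5)t} + c e^{i(1-√5)t}` with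
`a, b, c > 0` and `a + b + c = 1/2`, so `U(t)_{xy}` lies in the disc of radius `1/2` about `-1/2`,
which meets the unit circle only at `-1`. Getting close to `-1` forces all three phases close
to `-1`, but they multiply to `1` because the three eigenvalues sum to `0`. Quantitatively, for
units `u, v, w` with `uvw = 1` we have `|1 + u| + |1 + v| + |1 + w| ≥ |1 + uvw| = 2`, which keeps
`|U(t)_{xy}|²` below `29/30` for all `t`.
-/

open Matrix Polynomial

/-- The adjacency matrix of the wheel `W = C₄ ∨ K₁`: vertices `0,1,2,3` form a `4`-cycle
and vertex `4` is adjacent to all of them. -/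
def wheelAdj : Matrix (Fin 5) (Fin 5) ℝ :=
  !![0, 1, 0, 1, 1;
     1, 0, 1, 0, 1;
     0, 1, 0, 1, 1;
     1, 0, 1, 0, 1;
     1, 1, 1, 1, 0]

open Complex

namespace Matrix

variable {m 𝔸 : Type*} [Fintype m] [DecidableEq m] [NormedCommRing 𝔸] [NormedAlgebra ℚ 𝔸]
  [CompleteSpace 𝔸]

theorem exp_eq_of_eq_mul_diagonal_mul {A P Q : Matrix m m 𝔸} {d : m → 𝔸} (hPQ : P * Q = 1)
    (hA : A = P * diagonal d * Q) :
    NormedSpace.exp A = P * diagonal (fun k => NormedSpace.exp (d k)) * Q := by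
  have hQ : Q = P⁻¹ := (inv_eq_right_inv hPQ).symm
  subst hA hQ
  rw [exp_conj _ _ (IsUnit.of_mul_eq_one _ hPQ), exp_diagonal, Pi.exp_def]

end Matrix

theorem two_le_sum_norm_one_add {u v w : ℂ} (hu : ‖u‖ = 1) (hv : ‖v‖ = 1)
    (huvw : u * v * w = 1) : 2 ≤ ‖1 + u‖ + ‖1 + v‖ + ‖1 + w‖ := by
  have key : u * v * w + 1 = u * v * (1 + w) - u * (1 + v) + (1 + u) := by ring
  calc (2 : ℝ) = ‖u * v * w + 1‖ := by rw [huvw]; norm_num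
    _ ≤ ‖u * v * (1 + w)‖ + ‖u * (1 + v)‖ + ‖1 + u‖ := by
      rw [key]; exact (norm_add_le _ _).trans (by gcongr; exact norm_sub_le _ _)
    _ = ‖1 + u‖ + ‖1 + v‖ + ‖1 + w‖ := by simp only [norm_mul, hu, hv]; ring

theorem sq_norm_one_add {u : ℂ} (hu : ‖u‖ = 1) : ‖1 + u‖ ^ 2 = 2 * (1 + u.re) := by
  rw [← normSq_eq_norm_sq, normSq_add, normSq_one, normSq_eq_norm_sq, hu]
  simp only [one_pow, one_mul, conj_re]
  ring

theorem two_thirds_le_sum_one_add_re {u v w : ℂ} (hu : ‖u‖ = 1) (hv : ‖v‖ = 1)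
    (hw : ‖w‖ = 1) (huvw : u * v * w = 1) : 2 / 3 ≤ (1 + u.re) + (1 + v.re) + (1 + w.re) := by
  have hsum := two_le_sum_norm_one_add hu hv huvw
  nlinarith [sq_norm_one_add hu, sq_norm_one_add hv, sq_norm_one_add hw,
    sq_nonneg (‖1 + u‖ - ‖1 + v‖), sq_nonneg (‖1 + v‖ - ‖1 + w‖),
    sq_nonneg (‖1 + u‖ - ‖1 + w‖)]

theorem sq_norm_neg_half_add_weighted_units_le {a b c m : ℝ} (hm : 0 ≤ m) (ha : m ≤ a)
    (hb : m ≤ b) (hc : m ≤ c) (habc : a + b + c = 1 / 2) {u v w : ℂ} (hu : ‖u‖ = 1)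
    (hv : ‖v‖ = 1) (hw : ‖w‖ = 1) (huvw : u * v * w = 1) :
    ‖-(1 / 2) + a * u + b * v + c * w‖ ^ 2 ≤ 1 - 2 / 3 * m := by
  set z := -(1 / 2) + a * u + b * v + c * w
  have hdisc : ‖z + 1 / 2‖ ≤ 1 / 2 := by
    calc ‖z + 1 / 2‖ = ‖(a : ℂ) * u + b * v + c * w‖ := by congr 1; ring
      _ ≤ a + b + c := by
        refine (norm_add₃_le).trans ?_
        simp only [norm_mul, hu, hv, hw, mul_one, norm_real, Real.norm_eq_abs]
        rw [abs_of_nonneg (hm.trans ha), abs_of_nonneg (hm.trans hb),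
          abs_of_nonneg (hm.trans hc)]
      _ = 1 / 2 := habc
  have hsq : ‖z + 1 / 2‖ ^ 2 = ‖z‖ ^ 2 + z.re + 1 / 4 := by
    simp only [← normSq_eq_norm_sq, normSq_apply, add_re, add_im, div_ofNat_re, div_ofNat_im,
      one_re, one_im]
    ring
  have hre : z.re = -1 + a * (1 + u.re) + b * (1 + v.re) + c * (1 + w.re) := by
    simp only [z, add_re, neg_re, div_ofNat_re, one_re, re_ofReal_mul]
    linarith
  have hphases := two_thirds_le_sum_one_add_re hu hv hw huvw
  have hnonneg {s : ℂ} (hs : ‖s‖ = 1) : 0 ≤ 1 + s.re := by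
    linarith [neg_abs_le s.re, abs_re_le_norm s]
  have hdisc2 : ‖z + 1 / 2‖ ^ 2 ≤ 1 / 4 := by nlinarith [norm_nonneg (z + 1 / 2)]
  nlinarith [mul_le_mul_of_nonneg_right ha (hnonneg hu), mul_le_mul_of_nonneg_right hb (hnonneg hv),
    mul_le_mul_of_nonneg_right hc (hnonneg hw), mul_le_mul_of_nonneg_left hphases hm]

-- `r` stands for `√5`.
def wheelEigvecs (r : ℂ) : Matrix (Fin 5) (Fin 5) ℂ :=
  !![ 1,  1,  0,     1,        1;
     -1,  0,  1,     1,        1;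
      1, -1,  0,     1,        1;
     -1,  0, -1,     1,        1;
      0,  0,  0, r - 1, -(r + 1)]

noncomputable def wheelEigvecsInv (r : ℂ) : Matrix (Fin 5) (Fin 5) ℂ :=
  !![      1/4,     -1/4,      1/4,     -1/4,     0;
           1/2,        0,     -1/2,        0,     0;
             0,      1/2,        0,     -1/2,     0;
     (5 + r)/40, (5 + r)/40, (5 + r)/40, (5 + r)/40,  r/10;
     (5 - r)/40, (5 - r)/40, (5 - r)/40, (5 - r)/40, -r/10]

def wheelEigenvalues (r : ℂ) : Fin 5 → ℂ := ![-2, 0, 0, 1 + r, 1 - r]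

theorem wheelEigvecs_mul_inv {r : ℂ} (hr : r ^ 2 = 5) :
    wheelEigvecs r * wheelEigvecsInv r = 1 := by
  ext i j
  fin_cases i <;> fin_cases j <;>
    simp [wheelEigvecs, wheelEigvecsInv, mul_apply, Fin.sum_univ_five, one_apply] <;>
    ring_nf <;> simp only [hr] <;> ring_nf

theorem map_wheelAdj_mul_wheelEigvecs {r : ℂ} (hr : r ^ 2 = 5) :
    wheelAdj.map (↑) * wheelEigvecs r = wheelEigvecs r * diagonal (wheelEigenvalues r) := by
  ext i j
  fin_cases i <;> fin_cases j <;>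
    simp [wheelAdj, wheelEigvecs, wheelEigenvalues, mul_apply, Fin.sum_univ_five] <;>
    ring_nf <;> simp only [hr] <;> ring_nf

theorem map_wheelAdj_eq {r : ℂ} (hr : r ^ 2 = 5) :
    wheelAdj.map (↑) = wheelEigvecs r * diagonal (wheelEigenvalues r) * wheelEigvecsInv r := by
  rw [← map_wheelAdj_mul_wheelEigvecs hr, Matrix.mul_assoc, wheelEigvecs_mul_inv hr,
    Matrix.mul_one]

theorem transition_wheelAdj (t : ℝ) :
    transition wheelAdj t = wheelEigvecs √5 *
      diagonal (fun k => cexp (t * I * wheelEigenvalues √5 k)) * wheelEigvecsInv √5 := by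
  have hr : ((√5 : ℝ) : ℂ) ^ 2 = 5 := by norm_cast; simp
  rw [transition, Matrix.exp_eq_of_eq_mul_diagonal_mul (wheelEigvecs_mul_inv hr)
    (d := (t * I) • wheelEigenvalues √5)]
  · simp only [Pi.smul_apply, smul_eq_mul, exp_eq_exp_ℂ]
  · rw [map_wheelAdj_eq hr, diagonal_smul, Matrix.mul_smul, Matrix.smul_mul]

theorem transition_wheelAdj_apply_of_not_adj {x y : Fin 5} (hxy : x ≠ y)
    (hnadj : wheelAdj x y = 0) (t : ℝ) :
    transition wheelAdj t x y = -(1 / 2) + ((1 / 4 : ℝ) : ℂ) * cexp (t * I * (-2))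
      + (((5 + √5) / 40 : ℝ) : ℂ) * cexp (t * I * (1 + √5))
      + (((5 - √5) / 40 : ℝ) : ℂ) * cexp (t * I * (1 - √5)) := by
  rw [transition_wheelAdj]
  fin_cases x <;> fin_cases y <;> simp [wheelAdj] at hxy hnadj ⊢ <;>
    simp [wheelEigvecs, wheelEigvecsInv, wheelEigenvalues, mul_apply, vecMul_diagonal,
      Fin.sum_univ_five] <;> ring

theorem sq_norm_transition_wheelAdj_le {x y : Fin 5} (hxy : x ≠ y) (hnadj : wheelAdj x y = 0)
    (t : ℝ) : ‖transition wheelAdj t x y‖ ^ 2 ≤ 29 / 30 := by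
  have h5 : √5 < 3 := by rw [Real.sqrt_lt' (by norm_num)]; norm_num
  have hunit (c : ℝ) : ‖cexp (t * I * c)‖ = 1 := by simp [norm_exp]
  have hprod : cexp (t * I * (-2 : ℝ)) * cexp (t * I * (1 + √5 : ℝ)) *
      cexp (t * I * (1 - √5 : ℝ)) = 1 := by
    rw [← exp_add, ← exp_add, ← exp_zero]; push_cast; ring_nf
  have hbound := sq_norm_neg_half_add_weighted_units_le (a := 1 / 4) (b := (5 + √5) / 40)
    (c := (5 - √5) / 40) (m := (5 - √5) / 40) (by linarith) (by linarith [Real.sqrt_nonneg 5])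
    (by linarith [Real.sqrt_nonneg 5]) le_rfl
    (by ring) (hunit (-2)) (hunit (1 + √5)) (hunit (1 - √5)) hprod
  rw [transition_wheelAdj_apply_of_not_adj hxy hnadj]
  push_cast at hbound ⊢
  linarith

theorem stmt_10 (x y : Fin 5) (hxy : x ≠ y) (hnadj : wheelAdj x y = 0) :
    ¬ PGST wheelAdj x y := by
  intro hPGST
  obtain ⟨t, -, ht⟩ := hPGST (1 / 100) (by norm_num)
  nlinarith [sq_norm_transition_wheelAdj_le hxy hnadj t]
end

section
/- Let A′ and A_σ be m×m real symmetric matrices, A_S an s×s real symmetric matrix, and A_δ an m×s real matrix, and let A be the (2m+s)×(2m+s) symmetric block matrix with block rows [A′, A_σ, A_δ], [A_σ, A′, A_δ], [A_δᵀ, A_δᵀ, A_S]. Then det(xI − A) = det(xI − A₊) · det(xI − A₋), where A₊ is the (m+s)×(m+s) block matrix with block rows [A′ + A_σ, A_δ], [2A_δᵀ, A_S] and A₋ = A′ − A_σ. Moreover, A has an eigenbasis consisting of vectors of the two forms [a; a; b] where [a; b] is an eigenvector of A₊, and [c; −c; 0] where c is an eigenvector of A₋ (each with the same eigenvalue as the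 corresponding eigenvector of A₊ or A₋). -/
/-!
The swap of the two copies of `G′` commutes with `A`, so `A` preserves the symmetric vectors
`[a; a; b]` and the antisymmetric vectors `[c; -c; 0]`, acting on them as `A₊` and `A₋`.
`A₋` is symmetric, and `A₊` becomes symmetric after scaling the `S`-coordinates by `√2`, so both
have real eigenbases. Lifting them gives an eigenbasis of `A`, and over an eigenbasis the
characteristic polynomial is the product of the factors `X - λ`.
-/

open Matrix Polynomial

/-- The symmetric block matrix with block rows `[A', Aσ, Aδ]`, `[Aσ, A', Aδ]`,
`[Aδᵀ, Aδᵀ, A_S]`. -/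
def bigBlock {m s : ℕ} (A' Aσ : Matrix (Fin m) (Fin m) ℝ)
    (Aδ : Matrix (Fin m) (Fin s) ℝ) (AS : Matrix (Fin s) (Fin s) ℝ) :
    Matrix (Fin m ⊕ (Fin m ⊕ Fin s)) (Fin m ⊕ (Fin m ⊕ Fin s)) ℝ :=
  Matrix.of fun i j =>
    match i, j with
    | Sum.inl i, Sum.inl j => A' i j
    | Sum.inl i, Sum.inr (Sum.inl j) => Aσ i j
    | Sum.inl i, Sum.inr (Sum.inr j) => Aδ i j
    | Sum.inr (Sum.inl i), Sum.inl j => Aσ i j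
    | Sum.inr (Sum.inl i), Sum.inr (Sum.inl j) => A' i j
    | Sum.inr (Sum.inl i), Sum.inr (Sum.inr j) => Aδ i j
    | Sum.inr (Sum.inr i), Sum.inl j => Aδ j i
    | Sum.inr (Sum.inr i), Sum.inr (Sum.inl j) => Aδ j i
    | Sum.inr (Sum.inr i), Sum.inr (Sum.inr j) => AS i j

section Eigenbasis

variable {ι : Type*} [Fintype ι] [DecidableEq ι]

theorem Matrix.charpoly_eq_prod_of_basis_eigenvectors {K : Type*} [CommRing K]
    (M : Matrix ι ι K) (b : Module.Basis ι K (ι → K)) (ev : ι → K)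
    (h : ∀ k, M *ᵥ b k = ev k • b k) :
    M.charpoly = ∏ k, (X - C (ev k)) := by
  have hdiag : LinearMap.toMatrix b b M.toLin' = diagonal ev := by
    ext i j
    rw [LinearMap.toMatrix_apply, toLin'_apply, h j, map_smul, b.repr_self]
    obtain rfl | hij := eq_or_ne i j <;> simp [*]
  rw [← charpoly_diagonal, ← hdiag, LinearMap.charpoly_toMatrix, charpoly_toLin']

theorem Matrix.IsSymm.exists_basis_eigenvectors {M : Matrix ι ι ℝ} (hM : M.IsSymm) :
    ∃ (b : Module.Basis ι ℝ (ι → ℝ)) (ev : ι → ℝ), ∀ k, M *ᵥ b k = ev k • b k := by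
  have hH : M.IsHermitian := isHermitian_iff_isSymm.mpr hM
  exact ⟨hH.eigenvectorBasis.toBasis.map (WithLp.linearEquiv 2 ℝ _), hH.eigenvalues,
    fun k => by simpa using hH.mulVec_eigenvectorBasis k⟩

end Eigenbasis

section Scaling

variable {ι κ K : Type*} [Field K]

def scaleRight (t : K) (ht : t ≠ 0) : (ι ⊕ κ → K) ≃ₗ[K] (ι ⊕ κ → K) where
  toFun v := Sum.elim (v ∘ Sum.inl) (t • (v ∘ Sum.inr))
  invFun v := Sum.elim (v ∘ Sum.inl) (t⁻¹ • (v ∘ Sum.inr))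
  map_add' u v := by ext (i | k) <;> simp [mul_add]
  map_smul' c v := by ext (i | k) <;> simp [mul_left_comm]
  left_inv v := by ext (i | k) <;> simp [ht]
  right_inv v := by ext (i | k) <;> simp [ht]

theorem fromBlocks_mulVec_scaleRight [Fintype ι] [Fintype κ] (t : K) (ht : t ≠ 0)
    (P : Matrix ι ι K) (Q : Matrix ι κ K) (R : Matrix κ ι K) (S : Matrix κ κ K)
    (v : ι ⊕ κ → K) :
    fromBlocks P Q (t • R) S *ᵥ scaleRight t ht v =
      scaleRight t ht (fromBlocks P (t • Q) R S *ᵥ v) := by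
  ext (i | k) <;> simp [scaleRight, fromBlocks_mulVec, mulVec_smul, smul_mulVec]

end Scaling

theorem Matrix.IsSymm.exists_basis_eigenvectors_fromBlocks_two_smul_transpose
    {ι κ : Type*} [Fintype ι] [DecidableEq ι] [Fintype κ] [DecidableEq κ]
    {P : Matrix ι ι ℝ} {S : Matrix κ κ ℝ} (hP : P.IsSymm) (hS : S.IsSymm) (Q : Matrix ι κ ℝ) :
    ∃ (b : Module.Basis (ι ⊕ κ) ℝ (ι ⊕ κ → ℝ)) (ev : ι ⊕ κ → ℝ),
      ∀ k, Matrix.fromBlocks P Q ((2 : ℝ) • Qᵀ) S *ᵥ b k = ev k • b k := by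
  have ht : √2 ≠ 0 := by positivity
  have hsymm : (Matrix.fromBlocks P (√2 • Q) (√2 • Qᵀ) S).IsSymm :=
    hP.fromBlocks (by rw [transpose_smul]) hS
  obtain ⟨b, ev, hb⟩ := hsymm.exists_basis_eigenvectors
  refine ⟨b.map (scaleRight √2 ht), ev, fun k => ?_⟩
  have h2 : (2 : ℝ) • Qᵀ = √2 • √2 • Qᵀ := by
    rw [smul_smul, Real.mul_self_sqrt zero_le_two]
  rw [Module.Basis.map_apply, h2, fromBlocks_mulVec_scaleRight, hb, map_smul]

section Lifts

variable {ι κ K : Type*} [Ring K]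

def symLift : (ι ⊕ κ → K) →ₗ[K] (ι ⊕ (ι ⊕ κ) → K) where
  toFun u := Sum.elim (u ∘ Sum.inl) (Sum.elim (u ∘ Sum.inl) (u ∘ Sum.inr))
  map_add' u v := by ext (i | i | k) <;> rfl
  map_smul' t u := by ext (i | i | k) <;> rfl

def antisymLift : (ι → K) →ₗ[K] (ι ⊕ (ι ⊕ κ) → K) where
  toFun c := Sum.elim c (Sum.elim (-c) 0)
  map_add' c d := by ext (i | i | k) <;> simp [add_comm]
  map_smul' t c := by ext (i | i | k) <;> simp

@[simp]
theorem symLift_apply (u : ι ⊕ κ → K) :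
    symLift u = Sum.elim (u ∘ Sum.inl) (Sum.elim (u ∘ Sum.inl) (u ∘ Sum.inr)) := rfl

@[simp]
theorem antisymLift_apply (c : ι → K) :
    (antisymLift c : ι ⊕ (ι ⊕ κ) → K) = Sum.elim c (Sum.elim (-c) 0) := rfl

end Lifts

section AntisymSym

variable {ι κ θ η K : Type*} [Field K] [NeZero (2 : K)]

def antisymSymEquiv : ((ι → K) × (ι ⊕ κ → K)) ≃ₗ[K] (ι ⊕ (ι ⊕ κ) → K) where
  toFun p := antisymLift p.1 + symLift p.2
  map_add' p q := by simp only [Prod.fst_add, Prod.snd_add, map_add]; abel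
  map_smul' t p := by simp only [Prod.smul_fst, Prod.smul_snd, map_smul]; simp [smul_add]
  invFun v := ((2 : K)⁻¹ • (v ∘ Sum.inl - v ∘ Sum.inr ∘ Sum.inl),
    Sum.elim ((2 : K)⁻¹ • (v ∘ Sum.inl + v ∘ Sum.inr ∘ Sum.inl)) (v ∘ Sum.inr ∘ Sum.inr))
  left_inv p := by
    refine Prod.ext (funext fun i => ?_) (funext fun k => ?_)
    · simp; field_simp; ring
    · rcases k with i | k
      · simp; field_simp; ring
      · simp
  right_inv v := by
    ext (i | i | k) <;> simp <;> field_simp <;> ring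

noncomputable def Module.Basis.antisymSym (bm : Module.Basis θ K (ι → K))
    (bp : Module.Basis η K (ι ⊕ κ → K)) : Module.Basis (θ ⊕ η) K (ι ⊕ (ι ⊕ κ) → K) :=
  (bm.prod bp).map antisymSymEquiv

variable (bm : Module.Basis θ K (ι → K)) (bp : Module.Basis η K (ι ⊕ κ → K))

theorem Module.Basis.antisymSym_inl (i : θ) :
    bm.antisymSym bp (Sum.inl i) = antisymLift (bm i) := by
  simp [Module.Basis.antisymSym, antisymSymEquiv]

theorem Module.Basis.antisymSym_inr (j : η) :
    bm.antisymSym bp (Sum.inr j) = symLift (bp j) := by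
  simp [Module.Basis.antisymSym, antisymSymEquiv]

end AntisymSym

section BigBlock

variable {m s : ℕ} (A' Aσ : Matrix (Fin m) (Fin m) ℝ) (Aδ : Matrix (Fin m) (Fin s) ℝ)
  (AS : Matrix (Fin s) (Fin s) ℝ)

theorem bigBlock_mulVec (x y : Fin m → ℝ) (z : Fin s → ℝ) :
    bigBlock A' Aσ Aδ AS *ᵥ Sum.elim x (Sum.elim y z) =
      Sum.elim (A' *ᵥ x + Aσ *ᵥ y + Aδ *ᵥ z)
        (Sum.elim (Aσ *ᵥ x + A' *ᵥ y + Aδ *ᵥ z) (Aδᵀ *ᵥ x + Aδᵀ *ᵥ y + AS *ᵥ z)) := by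
  ext (i | i | k) <;> simp [bigBlock, mulVec, dotProduct, Fintype.sum_sum_type, add_assoc]

theorem bigBlock_mulVec_symLift (u : Fin m ⊕ Fin s → ℝ) :
    bigBlock A' Aσ Aδ AS *ᵥ symLift u =
      symLift (fromBlocks (A' + Aσ) Aδ ((2 : ℝ) • Aδᵀ) AS *ᵥ u) := by
  rw [symLift_apply, symLift_apply, bigBlock_mulVec, fromBlocks_mulVec]
  ext (i | i | k) <;> simp [add_mulVec, two_smul, add_assoc, add_comm]

theorem bigBlock_mulVec_antisymLift (c : Fin m → ℝ) :
    bigBlock A' Aσ Aδ AS *ᵥ antisymLift c = antisymLift ((A' - Aσ) *ᵥ c) := by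
  ext (i | i | k) <;> simp [bigBlock_mulVec, sub_mulVec, mulVec_neg] <;> ring

end BigBlock

theorem stmt_16 {m s : ℕ} (A' Aσ : Matrix (Fin m) (Fin m) ℝ)
    (Aδ : Matrix (Fin m) (Fin s) ℝ) (AS : Matrix (Fin s) (Fin s) ℝ)
    (hA' : A'.IsSymm) (hAσ : Aσ.IsSymm) (hAS : AS.IsSymm) :
    (bigBlock A' Aσ Aδ AS).charpoly =
        (Matrix.fromBlocks (A' + Aσ) Aδ ((2 : ℝ) • Aδᵀ) AS).charpoly *
          (A' - Aσ).charpoly ∧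
    ∃ (b : Module.Basis (Fin m ⊕ (Fin m ⊕ Fin s)) ℝ ((Fin m ⊕ (Fin m ⊕ Fin s)) → ℝ))
      (ev : (Fin m ⊕ (Fin m ⊕ Fin s)) → ℝ),
      ∀ k, bigBlock A' Aσ Aδ AS *ᵥ b k = ev k • (b k : (Fin m ⊕ (Fin m ⊕ Fin s)) → ℝ) ∧
        ((∃ (a : Fin m → ℝ) (c : Fin s → ℝ), Sum.elim a c ≠ 0 ∧
            Matrix.fromBlocks (A' + Aσ) Aδ ((2 : ℝ) • Aδᵀ) AS *ᵥ Sum.elim a c =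
              ev k • Sum.elim a c ∧
            (b k : (Fin m ⊕ (Fin m ⊕ Fin s)) → ℝ) = Sum.elim a (Sum.elim a c)) ∨
         (∃ c : Fin m → ℝ, c ≠ 0 ∧ (A' - Aσ) *ᵥ c = ev k • c ∧
            (b k : (Fin m ⊕ (Fin m ⊕ Fin s)) → ℝ) = Sum.elim c (Sum.elim (-c) 0))) := by
  obtain ⟨bm, ν, hν⟩ := (hA'.sub hAσ).exists_basis_eigenvectors
  obtain ⟨bp, μ, hμ⟩ :=
    (hA'.add hAσ).exists_basis_eigenvectors_fromBlocks_two_smul_transpose hAS Aδ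
  set b := bm.antisymSym bp
  have hb : ∀ k, bigBlock A' Aσ Aδ AS *ᵥ b k = Sum.elim ν μ k • b k := by
    rintro (i | j)
    · rw [bm.antisymSym_inl, bigBlock_mulVec_antisymLift, hν, map_smul, Sum.elim_inl]
    · rw [bm.antisymSym_inr, bigBlock_mulVec_symLift, hμ, map_smul, Sum.elim_inr]
  refine ⟨?_, b, Sum.elim ν μ, fun k => ⟨hb k, ?_⟩⟩
  · rw [charpoly_eq_prod_of_basis_eigenvectors _ b _ hb,
      charpoly_eq_prod_of_basis_eigenvectors _ bp _ hμ,
      charpoly_eq_prod_of_basis_eigenvectors _ bm _ hν, Fintype.prod_sum_type, mul_comm]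
    simp only [Sum.elim_inl, Sum.elim_inr]
  · rcases k with i | j
    · exact Or.inr ⟨bm i, bm.ne_zero i, hν i, bm.antisymSym_inl bp i⟩
    · refine Or.inl ⟨bp j ∘ Sum.inl, bp j ∘ Sum.inr, ?_, ?_, bm.antisymSym_inr bp j⟩ <;>
        rw [Sum.elim_comp_inl_inr]
      exacts [bp.ne_zero j, hμ j]
end
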